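/- arXiv:1607.04727 — 3 statements merged into one kernel-verified Lean document; each statement's English description precedes it below -/
import Mathlib

section
/- Fix t > 0, k ≥ 0, and a nonnegative weight kernel F(t,·) : (0,t) → [0,∞). Define the weighted integral operator I[f] = ∫₀ᵗ τ^k F(t,τ) f(τ) dτ. If f and g are synchronous on [0,∞) and x, y : [0,∞) → [0,∞) are nonnegative, and all the integrals below exist, then I[x]·I[y·f·g] + I[y]·I[x·f·g] ≥ I[x·f]·I[y·g] + I[y·f]·I[x·g]. -/
/-!
Writing each product of two weighted integrals as an iterated integral, the difference of the
two sides becomes `∫∫ H(τ, ρ) dρ dτ` with `H(τ, ρ) = ∑ pᵢ(τ) qᵢ(ρ)`. Swapping the roles of `τ` and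
`ρ` does not change `∑ (∫ pᵢ) (∫ qᵢ)`, so it suffices that the symmetrization
`H(τ, ρ) + H(ρ, τ) = w(τ) w(ρ) (x(τ) y(ρ) + x(ρ) y(τ)) (f(τ) - f(ρ)) (g(τ) - g(ρ))` is
nonnegative. Only products of integrable one-variable functions are integrated, so no Fubini
theorem is needed.
-/

open MeasureTheory

/-- Weighted integral operator `I[φ] = ∫₀ᵗ τ^k F(τ) φ(τ) dτ`. -/
noncomputable def wInt (k t : ℝ) (F φ : ℝ → ℝ) : ℝ :=
  ∫ τ in (0:ℝ)..t, τ ^ k * F τ * φ τ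

/-- Integrability of the weighted integrand. -/
def wIntble (k t : ℝ) (F φ : ℝ → ℝ) : Prop :=
  IntervalIntegrable (fun τ => τ ^ k * F τ * φ τ) volume 0 t

open Set

section IteratedIntegral

variable {α β ι : Type*} [MeasurableSpace α] [MeasurableSpace β] {μ : Measure α} {ν : Measure β}

theorem integral_integral_sum_mul (s : Finset ι) {p : ι → α → ℝ} {q : ι → β → ℝ}
    (hp : ∀ i ∈ s, Integrable (p i) μ) (hq : ∀ i ∈ s, Integrable (q i) ν) :
    ∫ a, ∫ b, ∑ i ∈ s, p i a * q i b ∂ν ∂μ = ∑ i ∈ s, (∫ a, p i a ∂μ) * ∫ b, q i b ∂ν := by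
  calc ∫ a, ∫ b, ∑ i ∈ s, p i a * q i b ∂ν ∂μ
      = ∫ a, ∑ i ∈ s, p i a * ∫ b, q i b ∂ν ∂μ := by
        congr 1; ext a
        rw [integral_finsetSum s fun i hi => (hq i hi).const_mul _]
        simp only [integral_const_mul]
    _ = ∑ i ∈ s, (∫ a, p i a ∂μ) * ∫ b, q i b ∂ν := by
        rw [integral_finsetSum s fun i hi => (hp i hi).mul_const _]
        simp only [integral_mul_const]

theorem sum_integral_mul_integral_nonneg_of_symm (s : Finset ι) {p q : ι → α → ℝ}
    (hp : ∀ i ∈ s, Integrable (p i) μ) (hq : ∀ i ∈ s, Integrable (q i) μ)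
    (h : ∀ᵐ a ∂μ, ∀ᵐ b ∂μ, 0 ≤ ∑ i ∈ s, (p i a * q i b + q i a * p i b)) :
    0 ≤ ∑ i ∈ s, (∫ a, p i a ∂μ) * ∫ a, q i a ∂μ := by
  have hsum := integral_integral_sum_mul (s.disjSum s) (p := Sum.elim p q) (q := Sum.elim q p)
    (by rintro (i | i) hi
        exacts [hp i (Finset.inl_mem_disjSum.1 hi), hq i (Finset.inr_mem_disjSum.1 hi)])
    (by rintro (i | i) hi
        exacts [hq i (Finset.inl_mem_disjSum.1 hi), hp i (Finset.inr_mem_disjSum.1 hi)])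
  simp only [Finset.sum_disjSum, Sum.elim_inl, Sum.elim_inr, ← Finset.sum_add_distrib] at hsum
  have hdouble : 0 ≤ ∑ i ∈ s, ((∫ a, p i a ∂μ) * (∫ a, q i a ∂μ) +
      (∫ a, q i a ∂μ) * ∫ a, p i a ∂μ) :=
    hsum ▸ integral_nonneg_of_ae (h.mono fun a ha => integral_nonneg_of_ae ha)
  simp only [mul_comm (∫ a, q _ a ∂μ), ← two_mul, ← Finset.mul_sum] at hdouble
  linarith

end IteratedIntegral

section WeightedChebyshev

variable {α : Type*} [MeasurableSpace α] {μ : Measure α}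

theorem integral_weighted_chebyshev {w f g x y : α → ℝ}
    (hw : ∀ᵐ a ∂μ, 0 ≤ w a) (hx : ∀ᵐ a ∂μ, 0 ≤ x a) (hy : ∀ᵐ a ∂μ, 0 ≤ y a)
    (hfg : ∀ᵐ a ∂μ, ∀ᵐ b ∂μ, 0 ≤ (f a - f b) * (g a - g b))
    (hwx : Integrable (fun a => w a * x a) μ) (hwy : Integrable (fun a => w a * y a) μ)
    (hwyfg : Integrable (fun a => w a * (y a * f a * g a)) μ)
    (hwxfg : Integrable (fun a => w a * (x a * f a * g a)) μ)
    (hwxf : Integrable (fun a => w a * (x a * f a)) μ)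
    (hwyg : Integrable (fun a => w a * (y a * g a)) μ)
    (hwyf : Integrable (fun a => w a * (y a * f a)) μ)
    (hwxg : Integrable (fun a => w a * (x a * g a)) μ) :
    (∫ a, w a * (x a * f a) ∂μ) * (∫ a, w a * (y a * g a) ∂μ) +
        (∫ a, w a * (y a * f a) ∂μ) * (∫ a, w a * (x a * g a) ∂μ) ≤
      (∫ a, w a * x a ∂μ) * (∫ a, w a * (y a * f a * g a) ∂μ) +
        (∫ a, w a * y a ∂μ) * ∫ a, w a * (x a * f a * g a) ∂μ := by
  let p : Fin 4 → α → ℝ := ![fun a => w a * x a, fun a => w a * y a,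
    fun a => -(w a * (x a * f a)), fun a => -(w a * (y a * f a))]
  let q : Fin 4 → α → ℝ := ![fun a => w a * (y a * f a * g a), fun a => w a * (x a * f a * g a),
    fun a => w a * (y a * g a), fun a => w a * (x a * g a)]
  have hp : ∀ i ∈ Finset.univ, Integrable (p i) μ := by
    intro i _; fin_cases i
    exacts [hwx, hwy, hwxf.neg, hwyf.neg]
  have hq : ∀ i ∈ Finset.univ, Integrable (q i) μ := by
    intro i _; fin_cases i
    exacts [hwyfg, hwxfg, hwyg, hwxg]
  have hkernel : ∀ᵐ a ∂μ, ∀ᵐ b ∂μ, 0 ≤ ∑ i, (p i a * q i b + q i a * p i b) := by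
    filter_upwards [hw, hx, hy, hfg] with a hwa hxa hya hfga
    filter_upwards [hw, hx, hy, hfga] with b hwb hxb hyb hfgab
    have hsymm : ∑ i, (p i a * q i b + q i a * p i b) =
        w a * w b * (x a * y b + x b * y a) * ((f a - f b) * (g a - g b)) := by
      simp only [p, q, Fin.sum_univ_four, Matrix.cons_val]
      ring
    rw [hsymm]
    have hxy := mul_nonneg (mul_nonneg hxa hyb) (mul_nonneg hxb hya)
    positivity
  have hsum := sum_integral_mul_integral_nonneg_of_symm Finset.univ hp hq hkernel
  simp only [p, q, Fin.sum_univ_four, Matrix.cons_val, integral_neg] at hsum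
  linarith

end WeightedChebyshev

theorem wInt_eq_integral_Ioo {k t : ℝ} (ht : 0 ≤ t) (F φ : ℝ → ℝ) :
    wInt k t F φ = ∫ τ in Ioo 0 t, τ ^ k * F τ * φ τ := by
  rw [wInt, intervalIntegral.integral_of_le ht, integral_Ioc_eq_integral_Ioo]

theorem wIntble.integrableOn_Ioo {k t : ℝ} {F φ : ℝ → ℝ} (ht : 0 ≤ t) (h : wIntble k t F φ) :
    IntegrableOn (fun τ => τ ^ k * F τ * φ τ) (Ioo 0 t) :=
  ((intervalIntegrable_iff_integrableOn_Ioc_of_le ht).1 h).mono_set Ioo_subset_Ioc_self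

theorem weighted_chebyshev_lemma_general (k t : ℝ) (ht : 0 < t)
    (F f g x y : ℝ → ℝ)
    (hF : ∀ τ ∈ Set.Ioo (0:ℝ) t, 0 ≤ F τ)
    (hsync : ∀ u v : ℝ, 0 ≤ u → 0 ≤ v → 0 ≤ (f u - f v) * (g u - g v))
    (hx : ∀ u : ℝ, 0 ≤ u → 0 ≤ x u) (hy : ∀ u : ℝ, 0 ≤ u → 0 ≤ y u)
    (h1 : wIntble k t F x) (h2 : wIntble k t F y)
    (h3 : wIntble k t F (fun τ => y τ * f τ * g τ))
    (h4 : wIntble k t F (fun τ => x τ * f τ * g τ))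
    (h5 : wIntble k t F (fun τ => x τ * f τ))
    (h6 : wIntble k t F (fun τ => y τ * g τ))
    (h7 : wIntble k t F (fun τ => y τ * f τ))
    (h8 : wIntble k t F (fun τ => x τ * g τ)) :
    wInt k t F x * wInt k t F (fun τ => y τ * f τ * g τ) +
      wInt k t F y * wInt k t F (fun τ => x τ * f τ * g τ) ≥
    wInt k t F (fun τ => x τ * f τ) * wInt k t F (fun τ => y τ * g τ) +
      wInt k t F (fun τ => y τ * f τ) * wInt k t F (fun τ => x τ * g τ) := by
  have hmem : ∀ᵐ τ ∂volume.restrict (Ioo 0 t), τ ∈ Ioo 0 t := ae_restrict_mem measurableSet_Ioo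
  simp only [ge_iff_le, wInt_eq_integral_Ioo ht.le]
  exact integral_weighted_chebyshev (w := fun τ => τ ^ k * F τ)
    (hmem.mono fun τ hτ => mul_nonneg (Real.rpow_nonneg hτ.1.le k) (hF τ hτ))
    (hmem.mono fun τ hτ => hx τ hτ.1.le) (hmem.mono fun τ hτ => hy τ hτ.1.le)
    (hmem.mono fun τ hτ => hmem.mono fun ρ hρ => hsync τ ρ hτ.1.le hρ.1.le)
    (h1.integrableOn_Ioo ht.le) (h2.integrableOn_Ioo ht.le) (h3.integrableOn_Ioo ht.le)
    (h4.integrableOn_Ioo ht.le) (h5.integrableOn_Ioo ht.le) (h6.integrableOn_Ioo ht.le)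
    (h7.integrableOn_Ioo ht.le) (h8.integrableOn_Ioo ht.le)

theorem weighted_chebyshev_lemma (k t : ℝ) (hk : 0 ≤ k) (ht : 0 < t)
    (F f g x y : ℝ → ℝ)
    (hF : ∀ τ ∈ Set.Ioo (0:ℝ) t, 0 ≤ F τ)
    (hsync : ∀ u v : ℝ, 0 ≤ u → 0 ≤ v → 0 ≤ (f u - f v) * (g u - g v))
    (hx : ∀ u : ℝ, 0 ≤ u → 0 ≤ x u) (hy : ∀ u : ℝ, 0 ≤ u → 0 ≤ y u)
    (h1 : wIntble k t F x) (h2 : wIntble k t F y)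
    (h3 : wIntble k t F (fun τ => y τ * f τ * g τ))
    (h4 : wIntble k t F (fun τ => x τ * f τ * g τ))
    (h5 : wIntble k t F (fun τ => x τ * f τ))
    (h6 : wIntble k t F (fun τ => y τ * g τ))
    (h7 : wIntble k t F (fun τ => y τ * f τ))
    (h8 : wIntble k t F (fun τ => x τ * g τ)) :
    wInt k t F x * wInt k t F (fun τ => y τ * f τ * g τ) +
      wInt k t F y * wInt k t F (fun τ => x τ * f τ * g τ) ≥
    wInt k t F (fun τ => x τ * f τ) * wInt k t F (fun τ => y τ * g τ) +
      wInt k t F (fun τ => y τ * f τ) * wInt k t F (fun τ => x τ * g τ) :=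
  weighted_chebyshev_lemma_general k t ht F f g x y hF hsync hx hy h1 h2 h3 h4 h5 h6 h7 h8
end

section
/- Fix t > 0 and a nonnegative kernel F(t,·) on (0,t) with weighted operator I[f] = ∫₀ᵗ τ^k F(t,τ) f(τ) dτ. Let f and g be synchronous on [0,∞) and r, p, q : [0,∞) → [0,∞) be nonnegative. Then (assuming all integrals exist): 2·I[r]·(I[p]·I[q·f·g] + I[q]·I[p·f·g]) + 2·I[p]·I[q]·I[r·f·g] ≥ I[r]·(I[p·f]·I[q·g] + I[q·f]·I[p·g]) + I[p]·(I[r·f]·I[q·g] + I[q·f]·I[r·g]) + I[q]·(I[r·f]·I[p·g] + I[p·f]·I[r·g]). -/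
open MeasureTheory

/-! For nonnegative weights `a`, `b` and synchronous `f`, `g`, the double integral
`∫∫ a(x) b(y) (f x - f y) (g x - g y)` is nonnegative; expanding it gives the two-weight
Chebyshev inequality `I[af] I[bg] + I[bf] I[ag] ≤ I[a] I[bfg] + I[b] I[afg]`. The three-weight
inequality is the sum of the two-weight inequalities for the pairs `(p, q)`, `(r, q)`, `(r, p)`,
multiplied by the nonnegative factors `I[r]`, `I[p]`, `I[q]` respectively. -/

section Chebyshev

variable {α : Type*} [MeasurableSpace α] {μ : Measure α} {f g a b : α → ℝ}

theorem integral_mul_bilinear (A B C D : ℝ) (ha : Integrable a μ)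
    (haf : Integrable (fun x => a x * f x) μ) (hag : Integrable (fun x => a x * g x) μ)
    (hafg : Integrable (fun x => a x * f x * g x) μ) :
    ∫ x, a x * (A * (f x * g x) - B * f x - C * g x + D) ∂μ =
      A * ∫ x, a x * f x * g x ∂μ - B * ∫ x, a x * f x ∂μ - C * ∫ x, a x * g x ∂μ +
        D * ∫ x, a x ∂μ := by
  have hexpand : (fun x => a x * (A * (f x * g x) - B * f x - C * g x + D)) =
      fun x => A * (a x * f x * g x) - B * (a x * f x) - C * (a x * g x) + D * a x := by
    funext x; ring
  rw [hexpand, integral_add (by fun_prop) (by fun_prop), integral_sub (by fun_prop) (by fun_prop),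
    integral_sub (by fun_prop) (by fun_prop), integral_const_mul, integral_const_mul,
    integral_const_mul, integral_const_mul]

theorem integral_chebyshev_two_weights {s : Set α} (hs : ∀ᵐ x ∂μ, x ∈ s)
    (hsync : ∀ x ∈ s, ∀ y ∈ s, 0 ≤ (f x - f y) * (g x - g y))
    (ha : 0 ≤ᵐ[μ] a) (hb : 0 ≤ᵐ[μ] b)
    (hIa : Integrable a μ) (hIaf : Integrable (fun x => a x * f x) μ)
    (hIag : Integrable (fun x => a x * g x) μ)
    (hIafg : Integrable (fun x => a x * f x * g x) μ)
    (hIb : Integrable b μ) (hIbf : Integrable (fun x => b x * f x) μ)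
    (hIbg : Integrable (fun x => b x * g x) μ)
    (hIbfg : Integrable (fun x => b x * f x * g x) μ) :
    (∫ x, a x * f x ∂μ) * (∫ x, b x * g x ∂μ) + (∫ x, b x * f x ∂μ) * (∫ x, a x * g x ∂μ) ≤
      (∫ x, a x ∂μ) * (∫ x, b x * f x * g x ∂μ) +
        (∫ x, b x ∂μ) * (∫ x, a x * f x * g x ∂μ) := by
  set Ib := ∫ x, b x ∂μ
  set Ibf := ∫ x, b x * f x ∂μ
  set Ibg := ∫ x, b x * g x ∂μ
  set Ibfg := ∫ x, b x * f x * g x ∂μ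
  have inner : ∀ y ∈ s, 0 ≤ Ib * (f y * g y) - Ibg * f y - Ibf * g y + Ibfg := by
    intro y hy
    have hK : Ib * (f y * g y) - Ibg * f y - Ibf * g y + Ibfg =
        ∫ x, b x * ((f x - f y) * (g x - g y)) ∂μ := by
      rw [← mul_one Ibfg, show ∫ x, b x * ((f x - f y) * (g x - g y)) ∂μ =
          ∫ x, b x * (1 * (f x * g x) - g y * f x - f y * g x + f y * g y) ∂μ by
        congr 1; funext x; ring, integral_mul_bilinear _ _ _ _ hIb hIbf hIbg hIbfg]
      ring
    rw [hK]
    refine integral_nonneg_of_ae ?_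
    filter_upwards [hs, hb] with x hx hbx using mul_nonneg hbx (hsync x hx y hy)
  have outer : 0 ≤ ∫ y, a y * (Ib * (f y * g y) - Ibg * f y - Ibf * g y + Ibfg) ∂μ := by
    refine integral_nonneg_of_ae ?_
    filter_upwards [hs, ha] with y hy hay using mul_nonneg hay (inner y hy)
  rw [integral_mul_bilinear _ _ _ _ hIa hIaf hIag hIafg] at outer
  linarith

end Chebyshev

section WeightedIntegral

variable {k t : ℝ} {F : ℝ → ℝ}

theorem wInt_chebyshev_two_weights (ht : 0 < t) {f g a b : ℝ → ℝ}
    (hF : ∀ τ ∈ Set.Ioo (0:ℝ) t, 0 ≤ F τ)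
    (hsync : ∀ u v : ℝ, 0 ≤ u → 0 ≤ v → 0 ≤ (f u - f v) * (g u - g v))
    (ha : ∀ u : ℝ, 0 ≤ u → 0 ≤ a u) (hb : ∀ u : ℝ, 0 ≤ u → 0 ≤ b u)
    (hIa : wIntble k t F a) (hIaf : wIntble k t F (fun τ => a τ * f τ))
    (hIag : wIntble k t F (fun τ => a τ * g τ))
    (hIafg : wIntble k t F (fun τ => a τ * f τ * g τ))
    (hIb : wIntble k t F b) (hIbf : wIntble k t F (fun τ => b τ * f τ))
    (hIbg : wIntble k t F (fun τ => b τ * g τ))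
    (hIbfg : wIntble k t F (fun τ => b τ * f τ * g τ)) :
    wInt k t F (fun τ => a τ * f τ) * wInt k t F (fun τ => b τ * g τ) +
      wInt k t F (fun τ => b τ * f τ) * wInt k t F (fun τ => a τ * g τ) ≤
    wInt k t F a * wInt k t F (fun τ => b τ * f τ * g τ) +
      wInt k t F b * wInt k t F (fun τ => a τ * f τ * g τ) := by
  have hs : ∀ᵐ τ ∂volume.restrict (Set.Ioc 0 t), τ ∈ Set.Ioo 0 t := by
    rw [← Measure.restrict_congr_set Ioo_ae_eq_Ioc]
    exact ae_restrict_mem measurableSet_Ioo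
  have hweight {c : ℝ → ℝ} (hc : ∀ u : ℝ, 0 ≤ u → 0 ≤ c u) :
      0 ≤ᵐ[volume.restrict (Set.Ioc 0 t)] fun τ => τ ^ k * F τ * c τ := by
    filter_upwards [hs] with τ hτ
    exact mul_nonneg (mul_nonneg (Real.rpow_nonneg hτ.1.le k) (hF τ hτ)) (hc τ hτ.1.le)
  have key := integral_chebyshev_two_weights hs
    (fun u hu v hv => hsync u v hu.1.le hv.1.le) (hweight ha) (hweight hb)
  -- the kernel `τ ^ k * F τ` is absorbed into the weights; `← mul_assoc` reconciles the bracketings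
  simp only [wIntble, wInt, intervalIntegrable_iff_integrableOn_Ioc_of_le ht.le,
    intervalIntegral.integral_of_le ht.le, IntegrableOn, ← mul_assoc] at *
  exact key hIa hIaf hIag hIafg hIb hIbf hIbg hIbfg

theorem wInt_nonneg (ht : 0 < t) {φ : ℝ → ℝ} (hF : ∀ τ ∈ Set.Ioo (0:ℝ) t, 0 ≤ F τ)
    (hφ : ∀ u : ℝ, 0 ≤ u → 0 ≤ φ u) : 0 ≤ wInt k t F φ := by
  refine intervalIntegral.integral_nonneg_of_ae_restrict ht.le ?_
  rw [← Measure.restrict_congr_set Ioo_ae_eq_Icc]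
  filter_upwards [ae_restrict_mem measurableSet_Ioo] with τ hτ
  exact mul_nonneg (mul_nonneg (Real.rpow_nonneg hτ.1.le k) (hF τ hτ)) (hφ τ hτ.1.le)

end WeightedIntegral

theorem weighted_chebyshev_three_weights_general (k t : ℝ) (ht : 0 < t)
    (F f g r p q : ℝ → ℝ)
    (hF : ∀ τ ∈ Set.Ioo (0:ℝ) t, 0 ≤ F τ)
    (hsync : ∀ u v : ℝ, 0 ≤ u → 0 ≤ v → 0 ≤ (f u - f v) * (g u - g v))
    (hr : ∀ u : ℝ, 0 ≤ u → 0 ≤ r u) (hp : ∀ u : ℝ, 0 ≤ u → 0 ≤ p u)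
    (hq : ∀ u : ℝ, 0 ≤ u → 0 ≤ q u)
    (hint : ∀ φ ∈ [r, p, q, fun τ => q τ * f τ * g τ, fun τ => p τ * f τ * g τ,
        fun τ => r τ * f τ * g τ, fun τ => p τ * f τ, fun τ => q τ * g τ,
        fun τ => q τ * f τ, fun τ => p τ * g τ, fun τ => r τ * f τ,
        fun τ => r τ * g τ], wIntble k t F φ) :
    2 * wInt k t F r * (wInt k t F p * wInt k t F (fun τ => q τ * f τ * g τ) +
        wInt k t F q * wInt k t F (fun τ => p τ * f τ * g τ)) +
      2 * wInt k t F p * wInt k t F q * wInt k t F (fun τ => r τ * f τ * g τ) ≥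
    wInt k t F r * (wInt k t F (fun τ => p τ * f τ) * wInt k t F (fun τ => q τ * g τ) +
        wInt k t F (fun τ => q τ * f τ) * wInt k t F (fun τ => p τ * g τ)) +
      wInt k t F p * (wInt k t F (fun τ => r τ * f τ) * wInt k t F (fun τ => q τ * g τ) +
        wInt k t F (fun τ => q τ * f τ) * wInt k t F (fun τ => r τ * g τ)) +
      wInt k t F q * (wInt k t F (fun τ => r τ * f τ) * wInt k t F (fun τ => p τ * g τ) +
        wInt k t F (fun τ => p τ * f τ) * wInt k t F (fun τ => r τ * g τ)) := by
  simp only [List.mem_cons, forall_eq_or_imp] at hint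
  obtain ⟨hIr, hIp, hIq, hIqfg, hIpfg, hIrfg, hIpf, hIqg, hIqf, hIpg, hIrf, hIrg, -⟩ := hint
  have hpq := wInt_chebyshev_two_weights ht hF hsync hp hq hIp hIpf hIpg hIpfg hIq hIqf hIqg hIqfg
  have hrq := wInt_chebyshev_two_weights ht hF hsync hr hq hIr hIrf hIrg hIrfg hIq hIqf hIqg hIqfg
  have hrp := wInt_chebyshev_two_weights ht hF hsync hr hp hIr hIrf hIrg hIrfg hIp hIpf hIpg hIpfg
  have hsum := add_le_add (add_le_add
    (mul_le_mul_of_nonneg_left hpq (wInt_nonneg (k := k) ht hF hr))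
    (mul_le_mul_of_nonneg_left hrq (wInt_nonneg (k := k) ht hF hp)))
    (mul_le_mul_of_nonneg_left hrp (wInt_nonneg (k := k) ht hF hq))
  linarith

theorem weighted_chebyshev_three_weights (k t : ℝ) (hk : 0 ≤ k) (ht : 0 < t)
    (F f g r p q : ℝ → ℝ)
    (hF : ∀ τ ∈ Set.Ioo (0:ℝ) t, 0 ≤ F τ)
    (hsync : ∀ u v : ℝ, 0 ≤ u → 0 ≤ v → 0 ≤ (f u - f v) * (g u - g v))
    (hr : ∀ u : ℝ, 0 ≤ u → 0 ≤ r u) (hp : ∀ u : ℝ, 0 ≤ u → 0 ≤ p u)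
    (hq : ∀ u : ℝ, 0 ≤ u → 0 ≤ q u)
    (hint : ∀ φ ∈ [r, p, q, fun τ => q τ * f τ * g τ, fun τ => p τ * f τ * g τ,
        fun τ => r τ * f τ * g τ, fun τ => p τ * f τ, fun τ => q τ * g τ,
        fun τ => q τ * f τ, fun τ => p τ * g τ, fun τ => r τ * f τ,
        fun τ => r τ * g τ], wIntble k t F φ) :
    2 * wInt k t F r * (wInt k t F p * wInt k t F (fun τ => q τ * f τ * g τ) +
        wInt k t F q * wInt k t F (fun τ => p τ * f τ * g τ)) +
      2 * wInt k t F p * wInt k t F q * wInt k t F (fun τ => r τ * f τ * g τ) ≥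
    wInt k t F r * (wInt k t F (fun τ => p τ * f τ) * wInt k t F (fun τ => q τ * g τ) +
        wInt k t F (fun τ => q τ * f τ) * wInt k t F (fun τ => p τ * g τ)) +
      wInt k t F p * (wInt k t F (fun τ => r τ * f τ) * wInt k t F (fun τ => q τ * g τ) +
        wInt k t F (fun τ => q τ * f τ) * wInt k t F (fun τ => r τ * g τ)) +
      wInt k t F q * (wInt k t F (fun τ => r τ * f τ) * wInt k t F (fun τ => p τ * g τ) +
        wInt k t F (fun τ => p τ * f τ) * wInt k t F (fun τ => r τ * g τ)) :=
  weighted_chebyshev_three_weights_general k t ht F f g r p q hF hsync hr hp hq hint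
end

section
/- Fix t > 0 and two nonnegative kernels defining weighted integral operators I₁ and I₂ on (0,t). Let f, g, h be positive continuous functions on [0,∞) satisfying (f(u)-f(v))(g(u)-g(v))(h(u)+h(v)) ≥ 0 for all u, v ∈ (0,t), and let x : [0,∞) → [0,∞) be nonnegative. Then: I₁[x]·I₂[x·f·g·h] + I₁[x·h]·I₂[x·f·g] + I₁[x·f·g]·I₂[x·h] + I₁[x·f·g·h]·I₂[x] ≥ I₁[x·f]·I₂[x·g·h] + I₁[x·g]·I₂[x·f·h] + I₁[x·g·h]·I₂[x·f] + I₁[x·f·h]·I₂[x·g]. -/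
/-!
Expanding `(f u - f v)(g u - g v)(h u + h v)` shows that the difference of the two sides is
`∫₀ᵗ ∫₀ᵗ v^k F₂(v) u^k F₁(u) x(u) x(v) (f u - f v)(g u - g v)(h u + h v) du dv`, whose integrand
is nonnegative on `(0,t)²`.
-/

open MeasureTheory

namespace intervalIntegral

variable {ι : Type*} {a b : ℝ}

theorem integral_nonneg_of_forall_mem_Ioo {φ : ℝ → ℝ} (hab : a ≤ b)
    (hφ : ∀ τ ∈ Set.Ioo a b, 0 ≤ φ τ) : 0 ≤ ∫ τ in a..b, φ τ := by
  apply integral_nonneg_of_ae_restrict hab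
  rw [← Measure.restrict_congr_set Ioo_ae_eq_Icc]
  filter_upwards [ae_restrict_mem measurableSet_Ioo] with τ hτ using hφ τ hτ

theorem integral_mul_sum_mul {w : ℝ → ℝ} (s : Finset ι) (c : ι → ℝ) (φ : ι → ℝ → ℝ)
    (hφ : ∀ i ∈ s, IntervalIntegrable (fun τ => w τ * φ i τ) volume a b) :
    ∫ τ in a..b, w τ * ∑ i ∈ s, c i * φ i τ = ∑ i ∈ s, c i * ∫ τ in a..b, w τ * φ i τ := by
  simp_rw [Finset.mul_sum, mul_left_comm (w _)]
  rw [integral_finsetSum fun i hi => (hφ i hi).const_mul (c i)]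
  simp only [integral_const_mul]

/-- The sum is `∫∫ w₁(u) w₂(v) ∑ cᵢ φᵢ(u) ψᵢ(v) du dv`, computed without Fubini. -/
theorem sum_mul_integral_mul_integral_nonneg {w₁ w₂ : ℝ → ℝ} (hab : a ≤ b)
    (hw₁ : ∀ τ ∈ Set.Ioo a b, 0 ≤ w₁ τ) (hw₂ : ∀ τ ∈ Set.Ioo a b, 0 ≤ w₂ τ)
    (s : Finset ι) (c : ι → ℝ) (φ ψ : ι → ℝ → ℝ)
    (hφ : ∀ i ∈ s, IntervalIntegrable (fun τ => w₁ τ * φ i τ) volume a b)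
    (hψ : ∀ i ∈ s, IntervalIntegrable (fun τ => w₂ τ * ψ i τ) volume a b)
    (hK : ∀ u ∈ Set.Ioo a b, ∀ v ∈ Set.Ioo a b, 0 ≤ ∑ i ∈ s, c i * φ i u * ψ i v) :
    0 ≤ ∑ i ∈ s, c i * (∫ u in a..b, w₁ u * φ i u) * ∫ v in a..b, w₂ v * ψ i v := by
  have inner : ∀ v, ∑ i ∈ s, c i * (∫ u in a..b, w₁ u * φ i u) * ψ i v =
      ∫ u in a..b, w₁ u * ∑ i ∈ s, c i * φ i u * ψ i v := by
    intro v
    have hswap : ∀ u, ∑ i ∈ s, c i * φ i u * ψ i v = ∑ i ∈ s, (c i * ψ i v) * φ i u :=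
      fun u => Finset.sum_congr rfl fun i _ => by ring
    simp_rw [hswap, integral_mul_sum_mul s _ φ hφ]
    exact Finset.sum_congr rfl fun i _ => by ring
  rw [← integral_mul_sum_mul s _ ψ hψ]
  refine integral_nonneg_of_forall_mem_Ioo hab fun v hv => mul_nonneg (hw₂ v hv) ?_
  rw [inner]
  exact integral_nonneg_of_forall_mem_Ioo hab fun u hu => mul_nonneg (hw₁ u hu) (hK u hu v hv)

end intervalIntegral

theorem weighted_three_function_inequality_general (k t : ℝ) (ht : 0 < t)
    (F₁ F₂ f g h x : ℝ → ℝ)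
    (hF₁ : ∀ τ ∈ Set.Ioo (0:ℝ) t, 0 ≤ F₁ τ)
    (hF₂ : ∀ τ ∈ Set.Ioo (0:ℝ) t, 0 ≤ F₂ τ)
    (hcond : ∀ u ∈ Set.Ioo (0:ℝ) t, ∀ v ∈ Set.Ioo (0:ℝ) t,
      0 ≤ (f u - f v) * (g u - g v) * (h u + h v))
    (hx : ∀ u : ℝ, 0 ≤ u → 0 ≤ x u)
    (hint : ∀ φ ∈ [x, fun τ => x τ * f τ * g τ * h τ, fun τ => x τ * h τ,
        fun τ => x τ * f τ * g τ, fun τ => x τ * f τ, fun τ => x τ * g τ * h τ,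
        fun τ => x τ * g τ, fun τ => x τ * f τ * h τ],
      wIntble k t F₁ φ ∧ wIntble k t F₂ φ) :
    wInt k t F₁ x * wInt k t F₂ (fun τ => x τ * f τ * g τ * h τ) +
      wInt k t F₁ (fun τ => x τ * h τ) * wInt k t F₂ (fun τ => x τ * f τ * g τ) +
      wInt k t F₁ (fun τ => x τ * f τ * g τ) * wInt k t F₂ (fun τ => x τ * h τ) +
      wInt k t F₁ (fun τ => x τ * f τ * g τ * h τ) * wInt k t F₂ x ≥
    wInt k t F₁ (fun τ => x τ * f τ) * wInt k t F₂ (fun τ => x τ * g τ * h τ) +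
      wInt k t F₁ (fun τ => x τ * g τ) * wInt k t F₂ (fun τ => x τ * f τ * h τ) +
      wInt k t F₁ (fun τ => x τ * g τ * h τ) * wInt k t F₂ (fun τ => x τ * f τ) +
      wInt k t F₁ (fun τ => x τ * f τ * h τ) * wInt k t F₂ (fun τ => x τ * g τ) := by
  -- `(f u - f v)(g u - g v)(h u + h v) = ∑ cᵢ pᵢ(u) qᵢ(v)`, with `φᵢ = x pᵢ` and `ψᵢ = x qᵢ`
  let φ : Fin 8 → ℝ → ℝ := ![x, fun τ => x τ * h τ, fun τ => x τ * f τ * g τ,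
    fun τ => x τ * f τ * g τ * h τ, fun τ => x τ * f τ, fun τ => x τ * g τ,
    fun τ => x τ * g τ * h τ, fun τ => x τ * f τ * h τ]
  let ψ : Fin 8 → ℝ → ℝ := ![fun τ => x τ * f τ * g τ * h τ, fun τ => x τ * f τ * g τ,
    fun τ => x τ * h τ, x, fun τ => x τ * g τ * h τ, fun τ => x τ * f τ * h τ,
    fun τ => x τ * f τ, fun τ => x τ * g τ]
  let c : Fin 8 → ℝ := ![1, 1, 1, 1, -1, -1, -1, -1]
  have hweight : ∀ F : ℝ → ℝ, (∀ τ ∈ Set.Ioo (0:ℝ) t, 0 ≤ F τ) →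
      ∀ τ ∈ Set.Ioo (0:ℝ) t, 0 ≤ τ ^ k * F τ :=
    fun F hF τ hτ => mul_nonneg (Real.rpow_nonneg hτ.1.le k) (hF τ hτ)
  have hkernel : ∀ u ∈ Set.Ioo (0:ℝ) t, ∀ v ∈ Set.Ioo (0:ℝ) t,
      0 ≤ ∑ i, c i * φ i u * ψ i v := by
    intro u hu v hv
    calc 0 ≤ x u * x v * ((f u - f v) * (g u - g v) * (h u + h v)) :=
          mul_nonneg (mul_nonneg (hx u hu.1.le) (hx v hv.1.le)) (hcond u hu v hv)
      _ = ∑ i, c i * φ i u * ψ i v := by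
          simp only [Fin.sum_univ_eight, Matrix.cons_val, Matrix.cons_val_zero,
            Matrix.cons_val_one, c, φ, ψ]
          ring
  have key := intervalIntegral.sum_mul_integral_mul_integral_nonneg ht.le (hweight F₁ hF₁)
    (hweight F₂ hF₂) Finset.univ c φ ψ
    (fun i _ => by fin_cases i <;> exact (hint _ (by simp [φ])).1)
    (fun i _ => by fin_cases i <;> exact (hint _ (by simp [ψ])).2) hkernel
  simp only [Fin.sum_univ_eight, Matrix.cons_val, Matrix.cons_val_zero, Matrix.cons_val_one,
    c, φ, ψ] at key
  unfold wInt
  linarith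

theorem weighted_three_function_inequality (k t : ℝ) (hk : 0 ≤ k) (ht : 0 < t)
    (F₁ F₂ f g h x : ℝ → ℝ)
    (hF₁ : ∀ τ ∈ Set.Ioo (0:ℝ) t, 0 ≤ F₁ τ)
    (hF₂ : ∀ τ ∈ Set.Ioo (0:ℝ) t, 0 ≤ F₂ τ)
    (hf : Continuous f) (hg : Continuous g) (hh : Continuous h)
    (hfpos : ∀ u : ℝ, 0 ≤ u → 0 < f u) (hgpos : ∀ u : ℝ, 0 ≤ u → 0 < g u)
    (hhpos : ∀ u : ℝ, 0 ≤ u → 0 < h u)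
    (hcond : ∀ u ∈ Set.Ioo (0:ℝ) t, ∀ v ∈ Set.Ioo (0:ℝ) t,
      0 ≤ (f u - f v) * (g u - g v) * (h u + h v))
    (hx : ∀ u : ℝ, 0 ≤ u → 0 ≤ x u)
    (hint : ∀ φ ∈ [x, fun τ => x τ * f τ * g τ * h τ, fun τ => x τ * h τ,
        fun τ => x τ * f τ * g τ, fun τ => x τ * f τ, fun τ => x τ * g τ * h τ,
        fun τ => x τ * g τ, fun τ => x τ * f τ * h τ],
      wIntble k t F₁ φ ∧ wIntble k t F₂ φ) :
    wInt k t F₁ x * wInt k t F₂ (fun τ => x τ * f τ * g τ * h τ) +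
      wInt k t F₁ (fun τ => x τ * h τ) * wInt k t F₂ (fun τ => x τ * f τ * g τ) +
      wInt k t F₁ (fun τ => x τ * f τ * g τ) * wInt k t F₂ (fun τ => x τ * h τ) +
      wInt k t F₁ (fun τ => x τ * f τ * g τ * h τ) * wInt k t F₂ x ≥
    wInt k t F₁ (fun τ => x τ * f τ) * wInt k t F₂ (fun τ => x τ * g τ * h τ) +
      wInt k t F₁ (fun τ => x τ * g τ) * wInt k t F₂ (fun τ => x τ * f τ * h τ) +
      wInt k t F₁ (fun τ => x τ * g τ * h τ) * wInt k t F₂ (fun τ => x τ * f τ) +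
      wInt k t F₁ (fun τ => x τ * f τ * h τ) * wInt k t F₂ (fun τ => x τ * g τ) :=
  weighted_three_function_inequality_general k t ht F₁ F₂ f g h x hF₁ hF₂ hcond hx hint
end
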